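/- arXiv:2106.14098 — 2 statements merged into one kernel-verified Lean document; each statement's English description precedes it below -/
import Mathlib

section
/- For every p₁, p₂ ∈ ℓ² and all s₁, s₂ ∈ ℝ, the Riemannian geodesic distance of the left-invariant weak Riemannian metric σ on the infinite-dimensional Heisenberg group vanishes between the points (p₁,p₂,s₁) and (p₁,p₂,s₂): d((p₁,p₂,s₁),(p₁,p₂,s₂)) = 0. In particular, d is not positive on all pairs of distinct points of 𝓗. -/
open scoped RealInnerProductSpace
open Real

noncomputable section

abbrev l2 : Type := lp (fun _ : ℕ => ℝ) 2

abbrev Hei : Type := l2 × l2 × ℝ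

/-- The group operation of the infinite dimensional Heisenberg group. -/
def hMul (p q : Hei) : Hei :=
  (p.1 + q.1, p.2.1 + q.2.1, p.2.2 + q.2.2 + ⟪p.1, q.2.1⟫ - ⟪p.2.1, q.1⟫)

/-- The square of the weak norm `‖u‖_η`. -/
def etaSq (u : l2) : ℝ := ∑' k : ℕ, (u k)^2 / ((k : ℝ) + 1)

/-- The square of the weak Riemannian norm `‖v‖_{σ,p}`. -/
def sigmaSq (p v : Hei) : ℝ :=
  etaSq v.1 + etaSq v.2.1 + (v.2.2 - ⟪p.1, v.2.1⟫ + ⟪p.2.1, v.1⟫)^2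

def PiecewiseC1 (γ : ℝ → Hei) : Prop :=
  ContinuousOn γ (Set.Icc 0 1) ∧
  ∃ S : Finset ℝ, ∀ t ∈ Set.Icc (0:ℝ) 1, t ∉ S →
    DifferentiableAt ℝ γ t ∧ ContinuousAt (deriv γ) t

def Horizontal (γ : ℝ → Hei) : Prop :=
  ∀ t ∈ Set.Icc (0:ℝ) 1, DifferentiableAt ℝ γ t →
    deriv (fun s => (γ s).2.2) t
      = ⟪(γ t).1, deriv (fun s => (γ s).2.1) t⟫
        - ⟪(γ t).2.1, deriv (fun s => (γ s).1) t⟫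

def lenSigma (γ : ℝ → Hei) : ℝ :=
  ∫ t in (0:ℝ)..1, Real.sqrt (sigmaSq (γ t) (deriv γ t))

def lenG (γ : ℝ → Hei) : ℝ :=
  ∫ t in (0:ℝ)..1,
    Real.sqrt (etaSq (deriv (fun s => (γ s).1) t) + etaSq (deriv (fun s => (γ s).2.1) t))

def dSigma (p q : Hei) : ℝ :=
  sInf {L | ∃ γ : ℝ → Hei, PiecewiseC1 γ ∧ γ 0 = p ∧ γ 1 = q ∧ lenSigma γ = L}

def rho (p q : Hei) : ℝ :=
  sInf {L | ∃ γ : ℝ → Hei, PiecewiseC1 γ ∧ Horizontal γ ∧ γ 0 = p ∧ γ 1 = q ∧ lenG γ = L}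

def sigma0 (v w : Hei) : ℝ :=
  (∑' k : ℕ, ((v.1 k) * (w.1 k) + (v.2.1 k) * (w.2.1 k)) / ((k : ℝ) + 1)) + v.2.2 * w.2.2

def bracket (X Y : Hei) : Hei := (0, 0, 2 * (⟪X.1, Y.2.1⟫ - ⟪X.2.1, Y.1⟫))

/-- `eVec n` is the `(n+1)`-th standard basis vector of `ℓ²`. -/
def eVec (n : ℕ) : l2 := lp.single 2 n 1

def e3 : Hei := (0, 0, 1)

/-!
Along the direction of the `n`-th basis vector the weak norm `‖·‖_η` is `1/√(n+1)` times the
`ℓ²` norm. A loop in the plane of the two `n`-th coordinates, lifted horizontally, climbs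
vertically by twice its enclosed area, independently of `n`, while its `σ`-length is `1/√(n+1)`
times its euclidean length. Left translation is an isometry, so translating these lifts to start
at `(p₁, p₂, s₁)` gives curves to `(p₁, p₂, s₂)` of length tending to `0`.
-/

lemma inner_smul_eVec_smul_eVec (a b : ℝ) (n : ℕ) : ⟪a • eVec n, b • eVec n⟫ = a * b := by
  simp [real_inner_smul_left, real_inner_smul_right, eVec, mul_comm]

lemma etaSq_smul_eVec (c : ℝ) (n : ℕ) : etaSq (c • eVec n) = c ^ 2 / ((n : ℝ) + 1) := by
  rw [etaSq, tsum_eq_single n]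
  · simp [eVec]
  · intro k hk
    simp [eVec, Pi.single_eq_of_ne hk]

lemma hMul_zero_right (p : Hei) : hMul p 0 = p := by
  simp [hMul]

lemma hMul_vertical (p : Hei) (a : ℝ) : hMul p (0, 0, a) = (p.1, p.2.1, p.2.2 + a) := by
  simp [hMul]

/-- `hMul p q = p + hMulLeftDeriv p q`, so this is the differential of left translation by `p`. -/
def hMulLeftDeriv (p v : Hei) : Hei := (v.1, v.2.1, v.2.2 + ⟪p.1, v.2.1⟫ - ⟪p.2.1, v.1⟫)

lemma continuous_hMulLeftDeriv (p : Hei) : Continuous (hMulLeftDeriv p) := by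
  unfold hMulLeftDeriv
  fun_prop

lemma HasDerivAt.hMul_left {β : ℝ → Hei} {v : Hei} {t : ℝ} (p : Hei) (hβ : HasDerivAt β v t) :
    HasDerivAt (fun s => hMul p (β s)) (hMulLeftDeriv p v) t := by
  have h1 : HasDerivAt (fun s => (β s).1) v.1 t := hβ.fst
  have h2 : HasDerivAt (fun s => (β s).2.1) v.2.1 t := hβ.snd.fst
  have h3 : HasDerivAt (fun s => (β s).2.2) v.2.2 t := hβ.snd.snd
  have hi1 : HasDerivAt (fun s => ⟪p.1, (β s).2.1⟫) ⟪p.1, v.2.1⟫ t := by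
    simpa using HasDerivAt.inner ℝ (hasDerivAt_const t p.1) h2
  have hi2 : HasDerivAt (fun s => ⟪p.2.1, (β s).1⟫) ⟪p.2.1, v.1⟫ t := by
    simpa using HasDerivAt.inner ℝ (hasDerivAt_const t p.2.1) h1
  exact HasDerivAt.prodMk (h1.const_add p.1)
    (HasDerivAt.prodMk (h2.const_add p.2.1) (((h3.const_add p.2.2).add hi1).sub hi2))

lemma sigmaSq_hMul_left (p q v : Hei) : sigmaSq (hMul p q) (hMulLeftDeriv p v) = sigmaSq q v := by
  simp only [sigmaSq, hMul, hMulLeftDeriv, inner_add_left]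
  ring

lemma lenSigma_hMul_left {β : ℝ → Hei} (p : Hei) (hβ : Differentiable ℝ β) :
    lenSigma (fun t => hMul p (β t)) = lenSigma β := by
  unfold lenSigma
  congr 1 with t
  rw [((hβ t).hasDerivAt.hMul_left p).deriv, sigmaSq_hMul_left]

lemma PiecewiseC1.of_differentiable {γ : ℝ → Hei} (hγ : Differentiable ℝ γ)
    (hγ' : Continuous (deriv γ)) : PiecewiseC1 γ :=
  ⟨hγ.continuous.continuousOn, ∅, fun t _ _ => ⟨hγ t, hγ'.continuousAt⟩⟩

lemma PiecewiseC1.hMul_left {β : ℝ → Hei} (p : Hei) (hβ : Differentiable ℝ β)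
    (hβ' : Continuous (deriv β)) : PiecewiseC1 (fun t => hMul p (β t)) := by
  have hderiv : deriv (fun t => hMul p (β t)) = fun t => hMulLeftDeriv p (deriv β t) :=
    funext fun t => ((hβ t).hasDerivAt.hMul_left p).deriv
  refine .of_differentiable (fun t => ((hβ t).hasDerivAt.hMul_left p).differentiableAt) ?_
  rw [hderiv]
  exact (continuous_hMulLeftDeriv p).comp hβ'

lemma lenSigma_nonneg (γ : ℝ → Hei) : 0 ≤ lenSigma γ :=
  intervalIntegral.integral_nonneg zero_le_one fun _ _ => Real.sqrt_nonneg _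

lemma dSigma_nonneg (p q : Hei) : 0 ≤ dSigma p q :=
  Real.sInf_nonneg fun _ ⟨γ, _, _, _, hL⟩ => hL ▸ lenSigma_nonneg γ

lemma dSigma_le_lenSigma {γ : ℝ → Hei} (hγ : PiecewiseC1 γ) :
    dSigma (γ 0) (γ 1) ≤ lenSigma γ :=
  csInf_le ⟨0, fun _ ⟨γ, _, _, _, hL⟩ => hL ▸ lenSigma_nonneg γ⟩ ⟨γ, hγ, rfl, rfl, rfl⟩

/-- The horizontal part runs once around an ellipse of signed area `π c`; the vertical part is
its horizontal lift, which therefore climbs by `2 π c`. -/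
def loop (n : ℕ) (c t : ℝ) : Hei :=
  (sin (2 * π * t) • eVec n, (c * (1 - cos (2 * π * t))) • eVec n,
    c * (2 * π * t - sin (2 * π * t)))

lemma hasDerivAt_loop (n : ℕ) (c t : ℝ) :
    HasDerivAt (loop n c)
      ((2 * π * cos (2 * π * t)) • eVec n, (2 * π * c * sin (2 * π * t)) • eVec n,
        2 * π * c * (1 - cos (2 * π * t))) t := by
  have hθ : HasDerivAt (fun s => 2 * π * s) (2 * π) t := by
    simpa using (hasDerivAt_id t).const_mul (2 * π)
  have hx := hθ.sin
  have hy := (hθ.cos.const_sub 1).const_mul c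
  have hw := (hθ.sub hθ.sin).const_mul c
  refine HasDerivAt.prodMk ?_ (HasDerivAt.prodMk ?_ ?_)
  · exact (hx.smul_const (eVec n)).congr_deriv (by congr 1; ring)
  · exact (hy.smul_const (eVec n)).congr_deriv (by congr 1; ring)
  · exact hw.congr_deriv (by ring)

lemma deriv_loop (n : ℕ) (c : ℝ) :
    deriv (loop n c) = fun t =>
      ((2 * π * cos (2 * π * t)) • eVec n, (2 * π * c * sin (2 * π * t)) • eVec n,
        2 * π * c * (1 - cos (2 * π * t))) :=
  funext fun t => (hasDerivAt_loop n c t).deriv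

lemma differentiable_loop (n : ℕ) (c : ℝ) : Differentiable ℝ (loop n c) :=
  fun t => (hasDerivAt_loop n c t).differentiableAt

lemma continuous_deriv_loop (n : ℕ) (c : ℝ) : Continuous (deriv (loop n c)) := by
  rw [deriv_loop]
  fun_prop

lemma sigmaSq_loop (n : ℕ) (c t : ℝ) :
    sigmaSq (loop n c t) (deriv (loop n c) t) =
      (2 * π) ^ 2 * (cos (2 * π * t) ^ 2 + c ^ 2 * sin (2 * π * t) ^ 2) / ((n : ℝ) + 1) := by
  simp only [deriv_loop, sigmaSq, loop, etaSq_smul_eVec, inner_smul_eVec_smul_eVec]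
  have horizontal : 2 * π * c * (1 - cos (2 * π * t))
      - sin (2 * π * t) * (2 * π * c * sin (2 * π * t))
      + c * (1 - cos (2 * π * t)) * (2 * π * cos (2 * π * t)) = 0 := by
    linear_combination (-2 * π * c) * sin_sq_add_cos_sq (2 * π * t)
  rw [horizontal]
  ring

lemma lenSigma_loop (n : ℕ) (c : ℝ) :
    lenSigma (loop n c) = lenSigma (loop 0 c) / √((n : ℝ) + 1) := by
  have key : ∀ m : ℕ, lenSigma (loop m c) =
      (∫ t in (0 : ℝ)..1, √((2 * π) ^ 2 * (cos (2 * π * t) ^ 2 + c ^ 2 * sin (2 * π * t) ^ 2)))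
        / √((m : ℝ) + 1) := by
    intro m
    rw [lenSigma, ← intervalIntegral.integral_div]
    congr 1 with t
    rw [sigmaSq_loop, Real.sqrt_div']
    positivity
  rw [key n, key 0]
  simp

lemma loop_zero (n : ℕ) (c : ℝ) : loop n c 0 = 0 := by
  simp [loop]

lemma loop_one (n : ℕ) (c : ℝ) : loop n c 1 = (0, 0, 2 * π * c) := by
  simp [loop]
  ring

open Filter Topology

lemma tendsto_div_sqrt_nat_add_one_zero (L : ℝ) :
    Tendsto (fun n : ℕ => L / √((n : ℝ) + 1)) atTop (𝓝 0) :=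
  tendsto_const_nhds.div_atTop
    (tendsto_sqrt_atTop.comp (tendsto_atTop_add_const_right _ 1 tendsto_natCast_atTop_atTop))

lemma dSigma_vertical_eq_zero (p₁ p₂ : l2) (s₁ s₂ : ℝ) :
    dSigma (p₁, p₂, s₁) (p₁, p₂, s₂) = 0 := by
  obtain ⟨c, hc⟩ : ∃ c, s₁ + 2 * π * c = s₂ := ⟨(s₂ - s₁) / (2 * π), by field_simp; ring⟩
  have hγ (n : ℕ) : PiecewiseC1 (fun t => hMul (p₁, p₂, s₁) (loop n c t)) :=
    .hMul_left _ (differentiable_loop n c) (continuous_deriv_loop n c)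
  have hle (n : ℕ) : dSigma (p₁, p₂, s₁) (p₁, p₂, s₂) ≤ lenSigma (loop 0 c) / √((n : ℝ) + 1) := by
    have h := dSigma_le_lenSigma (hγ n)
    rwa [loop_zero, loop_one, hMul_zero_right, hMul_vertical, hc,
      lenSigma_hMul_left _ (differentiable_loop n c), lenSigma_loop] at h
  exact le_antisymm (ge_of_tendsto' (tendsto_div_sqrt_nat_add_one_zero _) hle) (dSigma_nonneg _ _)

/-- The Riemannian geodesic distance `d` vanishes between points with the same
horizontal projection; in particular `d` is not positive on all pairs of distinct points. -/
theorem statement2 :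
    (∀ (p₁ p₂ : l2) (s₁ s₂ : ℝ), dSigma (p₁, p₂, s₁) (p₁, p₂, s₂) = 0) ∧
    ¬ (∀ p q : Hei, p ≠ q → 0 < dSigma p q) := by
  refine ⟨dSigma_vertical_eq_zero, fun hpos => ?_⟩
  have hne : ((0, 0, 0) : Hei) ≠ (0, 0, 1) := by simp
  exact (hpos _ _ hne).ne' (dSigma_vertical_eq_zero 0 0 0 1)

end
end

section
/- Fix an integer j ≥ 1 and let a_{1j} = √j (e_j, 0, 0) and b = e³ = (0,0,1), which are σ₀-orthonormal. Then: (i) σ₀([e³,Z], a_{1j}) = 0 for all Z, i.e. B_σ(a_{1j},e³) = 0; (ii) the element B_j = 2j^{3/2}(0, e_j, 0) satisfies σ₀([a_{1j},Z], e³) = σ₀(Z, B_j) for all Z, i.e. B_j = B_σ(e³,a_{1j}); (iii) therefore Arnold's sectional curvature of the plane spanned by a_{1j} and e³ equals K_σ(a_{1j}, e³) = (1/4)σ₀(B_j,B_j) = j², so that K_σ(a_{1j}, e³) → +∞ as j → ∞. The same conclusion holds with a_{2j} = √j (0, e_j, 0) in place of a_{1j}. -/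
open scoped RealInnerProductSpace
open Real

noncomputable section

/-- `a₁ⱼ = √j e¹_j`. -/
def a1 (j : ℕ) : Hei := Real.sqrt j • ((eVec (j - 1), 0, 0) : Hei)

/-- `a₂ⱼ = √j e²_j`. -/
def a2 (j : ℕ) : Hei := Real.sqrt j • ((0, eVec (j - 1), 0) : Hei)

/-- `B_σ(e³, a₁ⱼ) = 2 j^{3/2} e²_j`. -/
def B1 (j : ℕ) : Hei := (2 * (j : ℝ) * Real.sqrt j) • ((0, eVec (j - 1), 0) : Hei)

/-- `B_σ(e³, a₂ⱼ) = −2 j^{3/2} e¹_j`. -/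
def B2 (j : ℕ) : Hei := (-(2 * (j : ℝ) * Real.sqrt j)) • ((eVec (j - 1), 0, 0) : Hei)

/-!
Every vector involved is supported on one coordinate, and `σ₀` pairs such a vector with an
arbitrary `v` by reading off that coordinate of `v` with weight `1 / j`; so each claim is a
one-term computation. Part (i) holds because `e³` is central (`[e³, Z] = 0`), and (ii) because
`[a₁ⱼ, Z] = 2√j Z₂ⱼ e³`, which `σ₀`-pairs with `e³` exactly as `Z` pairs with `2 j^{3/2} e²_j`.
-/

lemma eVec_apply (m k : ℕ) : eVec m k = if k = m then 1 else 0 := by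
  simp [eVec, lp.single_apply, Pi.single_apply]

lemma inner_eVec_left (m : ℕ) (f : l2) : ⟪eVec m, f⟫ = f m := by
  simp [eVec, lp.inner_single_left]

lemma sigma0_zero_left (w : Hei) : sigma0 0 w = 0 := by
  simp [sigma0]

lemma sigma0_smul_right (c : ℝ) (v w : Hei) : sigma0 v (c • w) = c * sigma0 v w := by
  simp only [sigma0, Prod.smul_fst, Prod.smul_snd, lp.coeFn_smul, Pi.smul_apply, smul_eq_mul,
    mul_add, ← tsum_mul_left]
  congr 1
  · exact tsum_congr fun k => by ring
  · ring

lemma sigma0_e3_right (v : Hei) : sigma0 v e3 = v.2.2 := by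
  simp [sigma0, e3]

lemma sigma0_eVec_fst_right (v : Hei) {j : ℕ} (hj : 1 ≤ j) :
    sigma0 v (eVec (j - 1), 0, 0) = v.1 (j - 1) / j := by
  simp only [sigma0, eVec_apply]
  rw [tsum_eq_single (j - 1) fun k hk => by simp [hk]]
  simp [Nat.cast_sub hj]

lemma sigma0_eVec_snd_right (v : Hei) {j : ℕ} (hj : 1 ≤ j) :
    sigma0 v (0, eVec (j - 1), 0) = v.2.1 (j - 1) / j := by
  simp only [sigma0, eVec_apply]
  rw [tsum_eq_single (j - 1) fun k hk => by simp [hk]]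
  simp [Nat.cast_sub hj]

lemma bracket_e3_left (Z : Hei) : bracket e3 Z = 0 := by
  simp [bracket, e3]

lemma sigma0_bracket_e3 (X Z : Hei) :
    sigma0 (bracket X Z) e3 = 2 * (⟪X.1, Z.2.1⟫ - ⟪X.2.1, Z.1⟫) := by
  rw [sigma0_e3_right, bracket]

lemma sigma0_a1_right (v : Hei) {j : ℕ} (hj : 1 ≤ j) :
    sigma0 v (a1 j) = √j * v.1 (j - 1) / j := by
  rw [a1, sigma0_smul_right, sigma0_eVec_fst_right v hj, mul_div_assoc]

lemma sigma0_a2_right (v : Hei) {j : ℕ} (hj : 1 ≤ j) :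
    sigma0 v (a2 j) = √j * v.2.1 (j - 1) / j := by
  rw [a2, sigma0_smul_right, sigma0_eVec_snd_right v hj, mul_div_assoc]

lemma sigma0_B1_right (v : Hei) {j : ℕ} (hj : 1 ≤ j) :
    sigma0 v (B1 j) = 2 * √j * v.2.1 (j - 1) := by
  have : (j : ℝ) ≠ 0 := by positivity
  rw [B1, sigma0_smul_right, sigma0_eVec_snd_right v hj]
  field_simp

lemma sigma0_B2_right (v : Hei) {j : ℕ} (hj : 1 ≤ j) :
    sigma0 v (B2 j) = -(2 * √j * v.1 (j - 1)) := by
  have : (j : ℝ) ≠ 0 := by positivity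
  rw [B2, sigma0_smul_right, sigma0_eVec_fst_right v hj]
  field_simp

/-- `a₁ⱼ` and `e³` are `σ₀`-orthonormal, `B_σ(a₁ⱼ,e³) = 0`, `B_σ(e³,a₁ⱼ) = B1 j`, and
`K_σ(a₁ⱼ,e³) = (1/4)σ₀(B1 j, B1 j) = j² → +∞`; the same holds for `a₂ⱼ`. -/
theorem statement18 (j : ℕ) (hj : 1 ≤ j) :
    sigma0 (a1 j) (a1 j) = 1 ∧ sigma0 e3 e3 = 1 ∧ sigma0 (a1 j) e3 = 0 ∧
    (∀ Z : Hei, sigma0 (bracket e3 Z) (a1 j) = 0) ∧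
    (∀ Z : Hei, sigma0 (bracket (a1 j) Z) e3 = sigma0 Z (B1 j)) ∧
    (1/4) * sigma0 (B1 j) (B1 j) = (j : ℝ)^2 ∧
    sigma0 (a2 j) (a2 j) = 1 ∧ sigma0 (a2 j) e3 = 0 ∧
    (∀ Z : Hei, sigma0 (bracket e3 Z) (a2 j) = 0) ∧
    (∀ Z : Hei, sigma0 (bracket (a2 j) Z) e3 = sigma0 Z (B2 j)) ∧
    (1/4) * sigma0 (B2 j) (B2 j) = (j : ℝ)^2 ∧
    Filter.Tendsto (fun m : ℕ => (m : ℝ)^2) Filter.atTop Filter.atTop := by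
  have hj0 : (j : ℝ) ≠ 0 := by positivity
  have hsqrt : √(j : ℝ) * √j = j := Real.mul_self_sqrt j.cast_nonneg
  refine ⟨?_, by rw [sigma0_e3_right, e3], ?_, ?_, ?_, ?_, ?_, ?_, ?_, ?_, ?_, ?_⟩
  · rw [sigma0_a1_right _ hj]
    simp [a1, eVec_apply, hsqrt, hj0]
  · simp [sigma0_e3_right, a1]
  · simp only [bracket_e3_left, sigma0_zero_left, implies_true]
  · intro Z
    rw [sigma0_bracket_e3, sigma0_B1_right _ hj]
    simp only [a1, Prod.smul_mk, smul_zero, real_inner_smul_left, inner_eVec_left, inner_zero_left]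
    ring
  · rw [sigma0_B1_right _ hj]
    simp only [B1, Prod.smul_mk, smul_zero, lp.coeFn_smul, Pi.smul_apply, smul_eq_mul, eVec_apply,
      if_pos]
    linear_combination (j : ℝ) * hsqrt
  · rw [sigma0_a2_right _ hj]
    simp [a2, eVec_apply, hsqrt, hj0]
  · simp [sigma0_e3_right, a2]
  · simp only [bracket_e3_left, sigma0_zero_left, implies_true]
  · intro Z
    rw [sigma0_bracket_e3, sigma0_B2_right _ hj]
    simp only [a2, Prod.smul_mk, smul_zero, real_inner_smul_left, inner_eVec_left, inner_zero_left]
    ring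
  · rw [sigma0_B2_right _ hj]
    simp only [B2, Prod.smul_mk, smul_zero, lp.coeFn_smul, Pi.smul_apply, smul_eq_mul, eVec_apply,
      if_pos]
    linear_combination (j : ℝ) * hsqrt
  · exact (Filter.tendsto_pow_atTop two_ne_zero).comp tendsto_natCast_atTop_atTop
end
end
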